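/- For all holomorphic tangent fields Z, W, U, V on M the Gauss-type equation g(R_∇(Z, W̄) U, V̄) = 2 ( h(U, W̄) h(V̄, Z) − h(U, Z) h(V̄, W̄) ) holds, where R_∇(Z, W̄) U = ∇_Z ∇_{W̄} U − ∇_{W̄} ∇_Z U − ∇_{[Z, W̄]} U. -/

import Mathlib

noncomputable section
open scoped BigOperators

/-- `ℂ^{n+1}`, identified with `ℝ^{2n+2}` via its real structure. -/
abbrev E (n : ℕ) : Type := EuclideanSpace ℂ (Fin (n + 1))

/-- The standard complex structure: multiplication by `i`. -/
def J {n : ℕ} (v : E n) : E n := Complex.I • v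

/-- The real inner product `⟨x, y⟩ = Re ⟪x, y⟫`. -/
def rI {n : ℕ} (x y : E n) : ℝ := (inner ℂ x y : ℂ).re

/-- The (real) tangent space at `p` of a hypersurface with unit normal `ν`. -/
def tangAt {n : ℕ} (ν : E n → E n) (p : E n) : Set (E n) := {X | rI (ν p) X = 0}

/-- `M` is a smooth embedded real hypersurface of `ℂ^{n+1}` (locally a regular zero
set of a smooth real function), oriented by the smooth unit normal field `ν`
(extended smoothly to the ambient space). -/
def IsHypersurface {n : ℕ} (M : Set (E n)) (ν : E n → E n) : Prop :=
  ContDiff ℝ (⊤ : ℕ∞) ν ∧ (∀ p ∈ M, ‖ν p‖ = 1) ∧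
    ∀ p ∈ M, ∃ (V : Set (E n)) (F : E n → ℝ), IsOpen V ∧ p ∈ V ∧
      ContDiffOn ℝ (⊤ : ℕ∞) F V ∧ (M ∩ V = {z ∈ V | F z = 0}) ∧
      ∀ z ∈ M ∩ V, ∀ X : E n, (fderiv ℝ F z X = 0 ↔ X ∈ tangAt ν z)

/-- The horizontal (maximal complex) subspace `H_p = {X ∈ T_pM : JX ∈ T_pM}`. -/
def horizAt {n : ℕ} (ν : E n → E n) (p : E n) : Set (E n) :=
  {X | X ∈ tangAt ν p ∧ J X ∈ tangAt ν p}

/-- The second fundamental form `h(X,Y) = ⟨X, ∂_Y ν⟩`. -/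
def sff {n : ℕ} (ν : E n → E n) (p : E n) (X Y : E n) : ℝ :=
  rI X (fderiv ℝ ν p Y)

/-- The family `X_1, …, X_n, J X_1, …, J X_n`. -/
def combined {n : ℕ} (X : Fin n → E n) : (Fin n ⊕ Fin n) → E n :=
  Sum.elim X (fun α => J (X α))

/-- `{X_1, …, X_n, J X_1, …, J X_n}` is an orthonormal basis of the horizontal
space at `p` (w.r.t. the real inner product). -/
def IsHorizONB {n : ℕ} (ν : E n → E n) (p : E n) (X : Fin n → E n) : Prop :=
  (∀ α, X α ∈ horizAt ν p) ∧
  (∀ i j, rI (combined X i) (combined X j) = if i = j then 1 else 0) ∧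
  (∀ Y ∈ horizAt ν p, Y ∈ Submodule.span ℝ (Set.range (combined X)))

/-! ## Complexified tangent vectors
A complexified vector `X + iY` (the complexification unit `i` is distinct from
the complex structure `J`) is modelled as the pair `(X, Y)`. -/

/-- Complexified vectors of `ℂ^{n+1}`: `(X, Y)` stands for `X + iY`. -/
abbrev CV (n : ℕ) : Type := E n × E n

/-- Conjugation `X + iY ↦ X - iY`. -/
def conjCV {n : ℕ} (v : CV n) : CV n := (v.1, -v.2)

/-- Multiplication of a complexified vector by a complex scalar. -/
def csmul {n : ℕ} (c : ℂ) (v : CV n) : CV n :=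
  (c.re • v.1 - c.im • v.2, c.re • v.2 + c.im • v.1)

/-- `g`, the complex-bilinear extension of the real inner product. -/
def gC {n : ℕ} (v w : CV n) : ℂ :=
  ((rI v.1 w.1 - rI v.2 w.2 : ℝ) : ℂ) + ((rI v.1 w.2 + rI v.2 w.1 : ℝ) : ℂ) * Complex.I

/-- The flat connection `D` of `ℂ^{n+1}` (componentwise directional derivative),
complex-bilinearly extended: `DD V u p = D_u V (p)`. -/
def DD {n : ℕ} (V : E n → CV n) (u : CV n) (p : E n) : CV n :=
  (fderiv ℝ (fun z => (V z).1) p u.1 - fderiv ℝ (fun z => (V z).2) p u.2,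
   fderiv ℝ (fun z => (V z).1) p u.2 + fderiv ℝ (fun z => (V z).2) p u.1)

/-- The Lie bracket `[U,V]` of complexified fields (for the flat ambient space
it is `D_U V - D_V U`). -/
def bracket {n : ℕ} (U V : E n → CV n) (p : E n) : CV n :=
  DD V (U p) p - DD U (V p) p

/-- Derivative `U f` of a complex function along a complexified vector. -/
def dC {n : ℕ} (f : E n → ℂ) (u : CV n) (p : E n) : ℂ :=
  (fderiv ℝ f p u.1) + Complex.I * (fderiv ℝ f p u.2)

/-- The field `T = J(ν)`, viewed as a complexified field. -/
def TF {n : ℕ} (ν : E n → E n) (z : E n) : CV n := (J (ν z), 0)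

/-- The holomorphic unit normal `N = (ν - iT)/√2`. -/
def NF {n : ℕ} (ν : E n → E n) (z : E n) : CV n :=
  ((Real.sqrt 2)⁻¹ • ν z, -((Real.sqrt 2)⁻¹ • J (ν z)))

/-- The complex-bilinear extension of the second fundamental form:
`h(Z, W) = g(Z, D_W ν)`. -/
def hC {n : ℕ} (ν : E n → E n) (p : E n) (v w : CV n) : ℂ :=
  gC v (fderiv ℝ ν p w.1, fderiv ℝ ν p w.2)

/-- Conjugate of a complexified field. -/
def conjF {n : ℕ} (V : E n → CV n) : E n → CV n := fun z => conjCV (V z)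

/-- A holomorphic tangent field `Z = X - iJX`, with `X` a smooth real field
satisfying `⟪X, ν⟫ = 0` (hermitian orthogonality) at every point of `M`. -/
def IsHoloField {n : ℕ} (M : Set (E n)) (ν : E n → E n) (Z : E n → CV n) : Prop :=
  ContDiff ℝ (⊤ : ℕ∞) (fun z => (Z z).1) ∧
  (∀ z, (Z z).2 = -J ((Z z).1)) ∧
  ∀ p ∈ M, (inner ℂ (ν p) ((Z p).1) : ℂ) = 0

/-- A complexified tangent field: a smooth field whose value at every point of
`M` lies in the complexified tangent space `ℂ T_p M`. -/
def IsCTField {n : ℕ} (M : Set (E n)) (ν : E n → E n) (V : E n → CV n) : Prop :=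
  ContDiff ℝ (⊤ : ℕ∞) (fun z => (V z).1) ∧ ContDiff ℝ (⊤ : ℕ∞) (fun z => (V z).2) ∧
  ∀ p ∈ M, rI (ν p) ((V p).1) = 0 ∧ rI (ν p) ((V p).2) = 0

/-- Projection of a real vector onto the real horizontal space (orthogonal
complement of `ν` and `T = Jν`). -/
def horR {n : ℕ} (ν : E n → E n) (z : E n) (x : E n) : E n :=
  x - rI (ν z) x • ν z - rI (J (ν z)) x • J (ν z)

/-- Projection `Π_H` of a complexified tangent vector onto the holomorphic bundle. -/
def PiH {n : ℕ} (ν : E n → E n) (z : E n) (v : CV n) : CV n :=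
  ((2 : ℝ)⁻¹ • (horR ν z v.1 + J (horR ν z v.2)),
   (2 : ℝ)⁻¹ • (horR ν z v.2 - J (horR ν z v.1)))

/-- Projection `Π_H̄` onto the antiholomorphic bundle. -/
def PiHb {n : ℕ} (ν : E n → E n) (z : E n) (v : CV n) : CV n :=
  ((2 : ℝ)⁻¹ • (horR ν z v.1 - J (horR ν z v.2)),
   (2 : ℝ)⁻¹ • (horR ν z v.2 + J (horR ν z v.1)))

/-- The connection `∇`: writing `V = Z + W̄ + fT` with `Z = Π_H V` holomorphic,
`W̄ = Π_H̄ V` antiholomorphic and `f = g(V, T)`, one sets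
`∇_u V = D_u Z - g(D_u Z, N̄) N + D_u W̄ - g(D_u W̄, N) N̄ + (u f) T`. -/
def nabla {n : ℕ} (ν : E n → E n) (V : E n → CV n) (u : CV n) (p : E n) : CV n :=
  (DD (fun z => PiH ν z (V z)) u p
      - csmul (gC (DD (fun z => PiH ν z (V z)) u p) (conjCV (NF ν p))) (NF ν p))
  + (DD (fun z => PiHb ν z (V z)) u p
      - csmul (gC (DD (fun z => PiHb ν z (V z)) u p) (NF ν p)) (conjCV (NF ν p)))
  + csmul (dC (fun z => gC (V z) (TF ν z)) u p) (TF ν p)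

/-- The torsion `Tor_∇(U,V) = ∇_U V - ∇_V U - [U,V]`. -/
def Tor {n : ℕ} (ν : E n → E n) (U V : E n → CV n) (p : E n) : CV n :=
  nabla ν V (U p) p - nabla ν U (V p) p - bracket U V p

/-- The covariant derivative of the second fundamental form:
`∇_Z h (U, W) = Z h(U,W) - h(∇_Z U, W) - h(U, ∇_Z W)`. -/
def nablaHform {n : ℕ} (ν : E n → E n) (Zf U W : E n → CV n) (p : E n) : ℂ :=
  dC (fun z => hC ν z (U z) (W z)) (Zf p) p
    - hC ν p (nabla ν U (Zf p) p) (W p) - hC ν p (U p) (nabla ν W (Zf p) p)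

/-- The curvature `R_∇(X, Y) U = ∇_X ∇_Y U - ∇_Y ∇_X U - ∇_{[X,Y]} U` of the
connection `∇`. -/
def Rnab {n : ℕ} (ν : E n → E n) (Xf Yf U : E n → CV n) (p : E n) : CV n :=
  nabla ν (fun z => nabla ν U (Yf z) z) (Xf p) p
    - nabla ν (fun z => nabla ν U (Xf z) z) (Yf p) p
    - nabla ν U (bracket Xf Yf p) p

-- ALGEBRA LAYER
section Alg
variable {n : ℕ}

open Complex in
lemma rI_eq (x y : E n) : rI x y = (inner ℝ x y : ℝ) := by
  simp [rI, PiLp.inner_apply, Complex.inner, Complex.ofReal_sum, map_sum]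

lemma rI_comm (x y : E n) : rI x y = rI y x := by
  rw [rI_eq, rI_eq, real_inner_comm]

lemma rI_add_left (x y z : E n) : rI (x + y) z = rI x z + rI y z := by
  simp [rI_eq, inner_add_left]
lemma rI_add_right (x y z : E n) : rI x (y + z) = rI x y + rI x z := by
  simp [rI_eq, inner_add_right]
lemma rI_sub_left (x y z : E n) : rI (x - y) z = rI x z - rI y z := by
  simp [rI_eq, inner_sub_left]
lemma rI_sub_right (x y z : E n) : rI x (y - z) = rI x y - rI x z := by
  simp [rI_eq, inner_sub_right]
lemma rI_smul_left (r : ℝ) (x y : E n) : rI (r • x) y = r * rI x y := by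
  rw [rI_eq, rI_eq, real_inner_smul_left]
lemma rI_smul_right (r : ℝ) (x y : E n) : rI x (r • y) = r * rI x y := by
  rw [rI_eq, rI_eq, real_inner_smul_right]
lemma rI_neg_left (x y : E n) : rI (-x) y = - rI x y := by
  simp [rI_eq, inner_neg_left]
lemma rI_neg_right (x y : E n) : rI x (-y) = - rI x y := by
  simp [rI_eq, inner_neg_right]
lemma rI_zero_left (x : E n) : rI 0 x = 0 := by simp [rI_eq]
lemma rI_zero_right (x : E n) : rI x 0 = 0 := by simp [rI_eq]
lemma rI_self (x : E n) : rI x x = ‖x‖^2 := by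
  rw [rI_eq, real_inner_self_eq_norm_sq]

lemma rI_J_J (x y : E n) : rI (J x) (J y) = rI x y := by
  simp [rI, J, inner_smul_left, inner_smul_right]

lemma rI_J_left (x y : E n) : rI (J x) y = - rI x (J y) := by
  simp [rI, J, inner_smul_left, inner_smul_right]

lemma J_add (x y : E n) : J (x + y) = J x + J y := by simp [J, smul_add]
lemma J_sub (x y : E n) : J (x - y) = J x - J y := by simp [J, smul_sub]
lemma J_smul (r : ℝ) (x : E n) : J (r • x) = r • J x := by
  simp only [J]; rw [smul_comm]
lemma J_J (x : E n) : J (J x) = -x := by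
  simp [J, smul_smul, Complex.I_mul_I]
lemma J_neg (x : E n) : J (-x) = - J x := by simp [J]
lemma J_zero : J (0 : E n) = 0 := by simp [J]

end Alg
-- gC ALGEBRA LAYER
section GAlg
variable {n : ℕ}

lemma gC_expand (a b c d : E n) : gC (a,b) (c,d)
    = ((rI a c - rI b d : ℝ) : ℂ) + ((rI a d + rI b c : ℝ) : ℂ) * Complex.I := rfl

lemma gC_add_left (v w u : CV n) : gC (v + w) u = gC v u + gC w u := by
  obtain ⟨a,b⟩ := v; obtain ⟨c,d⟩ := w; obtain ⟨e,f⟩ := u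
  simp [gC, rI_add_left, Complex.ext_iff]; constructor <;> ring

lemma gC_sub_left (v w u : CV n) : gC (v - w) u = gC v u - gC w u := by
  obtain ⟨a,b⟩ := v; obtain ⟨c,d⟩ := w; obtain ⟨e,f⟩ := u
  simp [gC, rI_sub_left, Complex.ext_iff]; constructor <;> ring

lemma gC_zero_left (u : CV n) : gC 0 u = 0 := by
  obtain ⟨e,f⟩ := u
  simp [gC, Complex.ext_iff, (show ((0 : CV n)).1 = 0 from rfl), (show ((0 : CV n)).2 = 0 from rfl),
    rI_zero_left]

lemma gC_symm (v w : CV n) : gC v w = gC w v := by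
  obtain ⟨a,b⟩ := v; obtain ⟨c,d⟩ := w
  simp [gC, Complex.ext_iff]
  constructor
  · rw [rI_comm a c, rI_comm b d]
  · rw [rI_comm a d, rI_comm b c]; ring

lemma gC_csmul_left (c : ℂ) (v w : CV n) : gC (csmul c v) w = c * gC v w := by
  obtain ⟨a,b⟩ := v; obtain ⟨e,f⟩ := w
  simp [gC, csmul, rI_add_left, rI_sub_left, rI_smul_left, Complex.ext_iff]
  constructor <;> ring

lemma gC_antiholo (b c : E n) : gC (b, J b) (c, J c) = 0 := by
  simp [gC, Complex.ext_iff, rI_J_J]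
  rw [rI_J_left]; ring

lemma gC_split_left (c d : E n) (w : CV n) :
    gC (c, d) w = gC (c, (0:E n)) w + Complex.I * gC (d, (0:E n)) w := by
  obtain ⟨e,f⟩ := w
  simp [gC, rI_zero_left, Complex.ext_iff]; constructor <;> ring

lemma gC_J_pair (a b c d : E n) : gC (J a, J b) (c, d) = - gC (a, b) (J c, J d) := by
  simp [gC, Complex.ext_iff, rI_J_left]; constructor <;> ring

lemma csmul_I_holo (x : E n) : csmul Complex.I (x, -J x) = (J x, x) := by
  simp [csmul]

lemma csmul_negI_antiholo (Y : E n) : csmul (-Complex.I) (Y, J Y) = (J Y, -Y) := by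
  simp [csmul]

lemma PiHb_antiholo (ν : E n → E n) (z : E n) (v : CV n) :
    (PiHb ν z v).2 = J ((PiHb ν z v).1) := by
  simp [PiHb, J_add, J_sub, J_smul, J_J]
  abel

-- the key projection identity, unconditional
lemma gC_PiH_pair (ν : E n → E n) (z : E n) (w : CV n) (Y : E n) :
    gC (PiH ν z w) (Y, J Y)
      = gC w (Y, J Y) - gC ((ν z, (0:E n))) w * gC ((ν z, (0:E n))) (Y, J Y)
        - gC ((J (ν z), (0:E n))) w * gC ((J (ν z), (0:E n))) (Y, J Y) := by
  obtain ⟨a,b⟩ := w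
  simp only [PiH, horR, gC, Complex.ext_iff]
  simp only [J_add, J_sub, J_smul, J_J, J_neg, rI_add_left, rI_sub_left, rI_smul_left,
    rI_neg_left, rI_add_right, rI_sub_right, rI_smul_right, rI_neg_right, rI_J_J,
    rI_zero_left, rI_zero_right, Complex.add_re, Complex.add_im, Complex.mul_re, Complex.mul_im,
    Complex.ofReal_re, Complex.ofReal_im, Complex.I_re, Complex.I_im, Complex.sub_re, Complex.sub_im]
  rw [rI_J_left b Y, rI_J_left a Y, rI_J_left (ν z) a, rI_J_left (ν z) b, rI_J_left (ν z) Y]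
  constructor <;> ring
-- DERIVATIVE TOOLKIT
section Deriv
variable {n : ℕ}

/-- J as a continuous linear map. -/
def JL (n : ℕ) : E n →L[ℝ] E n := Complex.I • (ContinuousLinearMap.id ℝ (E n)).restrictScalars ℝ

lemma JL_apply (x : E n) : JL n x = J x := rfl

lemma contDiff_J {f : E n → E n} (hf : ContDiff ℝ (⊤:ℕ∞) f) :
    ContDiff ℝ (⊤:ℕ∞) (fun z => J (f z)) := ((JL n).contDiff).comp hf

lemma contDiff_rI {f g : E n → E n} (hf : ContDiff ℝ (⊤:ℕ∞) f) (hg : ContDiff ℝ (⊤:ℕ∞) g) :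
    ContDiff ℝ (⊤:ℕ∞) (fun z => rI (f z) (g z)) := by
  have : (fun z => rI (f z) (g z)) = fun z => (inner ℝ (f z) (g z) : ℝ) := by
    funext z; exact rI_eq _ _
  rw [this]; exact hf.inner ℝ hg

lemma contDiff_ofReal {f : E n → ℝ} (hf : ContDiff ℝ (⊤:ℕ∞) f) :
    ContDiff ℝ (⊤:ℕ∞) (fun z => (f z : ℂ)) := Complex.ofRealCLM.contDiff.comp hf

lemma contDiff_gC {A B : E n → CV n}
    (hA1 : ContDiff ℝ (⊤:ℕ∞) (fun z => (A z).1)) (hA2 : ContDiff ℝ (⊤:ℕ∞) (fun z => (A z).2))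
    (hB1 : ContDiff ℝ (⊤:ℕ∞) (fun z => (B z).1)) (hB2 : ContDiff ℝ (⊤:ℕ∞) (fun z => (B z).2)) :
    ContDiff ℝ (⊤:ℕ∞) (fun z => gC (A z) (B z)) := by
  have : (fun z => gC (A z) (B z))
      = fun z => ((rI ((A z).1) ((B z).1) - rI ((A z).2) ((B z).2) : ℝ) : ℂ)
          + ((rI ((A z).1) ((B z).2) + rI ((A z).2) ((B z).1) : ℝ) : ℂ) * Complex.I := rfl
  rw [this]
  exact (contDiff_ofReal ((contDiff_rI hA1 hB1).sub (contDiff_rI hA2 hB2))).add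
    ((contDiff_ofReal ((contDiff_rI hA1 hB2).add (contDiff_rI hA2 hB1))).mul contDiff_const)

lemma contDiff_fderiv_apply {F' : Type*} [NormedAddCommGroup F'] [NormedSpace ℝ F']
    {f : E n → F'} (hf : ContDiff ℝ (⊤:ℕ∞) f) {w : E n → E n} (hw : ContDiff ℝ (⊤:ℕ∞) w) :
    ContDiff ℝ (⊤:ℕ∞) (fun z => fderiv ℝ f z (w z)) :=
  (hf.fderiv_right (by simp)).clm_apply hw

lemma cdiff {F' : Type*} [NormedAddCommGroup F'] [NormedSpace ℝ F'] {f : E n → F'}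
    (hf : ContDiff ℝ (⊤:ℕ∞) f) (p : E n) : DifferentiableAt ℝ f p :=
  (hf.differentiable (by simp)).differentiableAt

-- applied product rule for rI
lemma fderiv_rI_apply {f g : E n → E n} {p : E n}
    (hf : DifferentiableAt ℝ f p) (hg : DifferentiableAt ℝ g p) (d : E n) :
    fderiv ℝ (fun z => rI (f z) (g z)) p d
      = rI (fderiv ℝ f p d) (g p) + rI (f p) (fderiv ℝ g p d) := by
  have : (fun z => rI (f z) (g z)) = fun z => (inner ℝ (f z) (g z) : ℝ) := by
    funext z; exact rI_eq _ _
  rw [this, rI_eq, rI_eq, fderiv_inner_apply ℝ hf hg d]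
  ring

lemma diffAt_rI {f g : E n → E n} {p : E n}
    (hf : DifferentiableAt ℝ f p) (hg : DifferentiableAt ℝ g p) :
    DifferentiableAt ℝ (fun z => rI (f z) (g z)) p := by
  have : (fun z => rI (f z) (g z)) = fun z => (inner ℝ (f z) (g z) : ℝ) := by
    funext z; exact rI_eq _ _
  rw [this]; exact hf.inner ℝ hg

lemma diffAt_gC {A B : E n → CV n} {p : E n}
    (hA1 : DifferentiableAt ℝ (fun z => (A z).1) p) (hA2 : DifferentiableAt ℝ (fun z => (A z).2) p)
    (hB1 : DifferentiableAt ℝ (fun z => (B z).1) p) (hB2 : DifferentiableAt ℝ (fun z => (B z).2) p) :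
    DifferentiableAt ℝ (fun z => gC (A z) (B z)) p := by
  have : (fun z => gC (A z) (B z))
      = fun z => ((rI ((A z).1) ((B z).1) - rI ((A z).2) ((B z).2) : ℝ) : ℂ)
          + ((rI ((A z).1) ((B z).2) + rI ((A z).2) ((B z).1) : ℝ) : ℂ) * Complex.I := rfl
  rw [this]
  exact ((Complex.ofRealCLM.differentiableAt.comp p ((diffAt_rI hA1 hB1).sub (diffAt_rI hA2 hB2)))).add
    (((Complex.ofRealCLM.differentiableAt.comp p ((diffAt_rI hA1 hB2).add (diffAt_rI hA2 hB1)))).mul (differentiableAt_const _))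

lemma fderiv_ofReal_pair {a b : E n → ℝ} {p : E n}
    (ha : DifferentiableAt ℝ a p) (hb : DifferentiableAt ℝ b p) (d : E n) :
    fderiv ℝ (fun z => ((a z : ℝ) : ℂ) + ((b z : ℝ) : ℂ) * Complex.I) p d
      = ((fderiv ℝ a p d : ℝ) : ℂ) + ((fderiv ℝ b p d : ℝ) : ℂ) * Complex.I := by
  have h1 : HasFDerivAt (fun z => ((a z : ℝ) : ℂ))
      (Complex.ofRealCLM.comp (fderiv ℝ a p)) p := Complex.ofRealCLM.hasFDerivAt.comp p ha.hasFDerivAt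
  have h2 := (Complex.ofRealCLM.hasFDerivAt.comp p hb.hasFDerivAt).mul_const Complex.I
  have h4 : HasFDerivAt (fun z => ((a z : ℝ) : ℂ) + ((b z : ℝ) : ℂ) * Complex.I)
      (Complex.ofRealCLM.comp (fderiv ℝ a p) + Complex.I • Complex.ofRealCLM.comp (fderiv ℝ b p)) p :=
    h1.add h2
  rw [h4.fderiv]
  simp [mul_comm]

-- complexified Leibniz rule for gC of two fields
lemma dC_gC_fields {A B : E n → CV n} {p : E n} (u : CV n)
    (hA1 : DifferentiableAt ℝ (fun z => (A z).1) p) (hA2 : DifferentiableAt ℝ (fun z => (A z).2) p)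
    (hB1 : DifferentiableAt ℝ (fun z => (B z).1) p) (hB2 : DifferentiableAt ℝ (fun z => (B z).2) p) :
    dC (fun z => gC (A z) (B z)) u p
      = gC (DD A u p) (B p) + gC (A p) (DD B u p) := by
  have hfun : (fun z => gC (A z) (B z))
      = fun z => ((rI ((A z).1) ((B z).1) - rI ((A z).2) ((B z).2) : ℝ) : ℂ)
          + ((rI ((A z).1) ((B z).2) + rI ((A z).2) ((B z).1) : ℝ) : ℂ) * Complex.I := rfl
  rw [dC, hfun, fderiv_ofReal_pair ((diffAt_rI hA1 hB1).fun_sub (diffAt_rI hA2 hB2))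
      ((diffAt_rI hA1 hB2).fun_add (diffAt_rI hA2 hB1)) u.1,
    fderiv_ofReal_pair ((diffAt_rI hA1 hB1).fun_sub (diffAt_rI hA2 hB2))
      ((diffAt_rI hA1 hB2).fun_add (diffAt_rI hA2 hB1)) u.2]
  rw [fderiv_fun_sub (diffAt_rI hA1 hB1) (diffAt_rI hA2 hB2),
      fderiv_fun_add (diffAt_rI hA1 hB2) (diffAt_rI hA2 hB1)]
  simp only [ContinuousLinearMap.sub_apply, ContinuousLinearMap.add_apply]
  rw [fderiv_rI_apply hA1 hB1, fderiv_rI_apply hA2 hB2, fderiv_rI_apply hA1 hB2,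
    fderiv_rI_apply hA2 hB1, fderiv_rI_apply hA1 hB1, fderiv_rI_apply hA2 hB2,
    fderiv_rI_apply hA1 hB2, fderiv_rI_apply hA2 hB1]
  simp only [DD, gC, rI_add_left, rI_sub_left, rI_add_right, rI_sub_right]
  push_cast
  ring_nf
  simp only [Complex.I_sq]
  ring

lemma dC_mul {f g : E n → ℂ} {p : E n} (u : CV n)
    (hf : DifferentiableAt ℝ f p) (hg : DifferentiableAt ℝ g p) :
    dC (fun z => f z * g z) u p = f p * dC g u p + g p * dC f u p := by
  rw [dC, dC, dC, fderiv_fun_mul hf hg]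
  simp only [ContinuousLinearMap.add_apply, ContinuousLinearMap.smul_apply, smul_eq_mul]
  ring

lemma dC_sub {f g : E n → ℂ} {p : E n} (u : CV n)
    (hf : DifferentiableAt ℝ f p) (hg : DifferentiableAt ℝ g p) :
    dC (fun z => f z - g z) u p = dC f u p - dC g u p := by
  rw [dC, dC, dC, fderiv_fun_sub hf hg]
  simp only [ContinuousLinearMap.sub_apply]
  ring

end Deriv
-- TANGENT DERIVATIVE LEMMA
section L1
variable {n : ℕ}

lemma tangent_fderiv {M : Set (E n)} {ν : E n → E n} (hs : IsHypersurface M ν)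
    {G : Type} [NormedAddCommGroup G] [NormedSpace ℝ G] {f : E n → G} {p : E n}
    (hp : p ∈ M) (hfd : DifferentiableAt ℝ f p)
    (hf0 : ∀ᶠ z in nhds p, z ∈ M → f z = 0) {u : E n} (hu : rI (ν p) u = 0) :
    fderiv ℝ f p u = 0 := by
  obtain ⟨Vs, F, hVo, hpV, hFs, hMV, hker⟩ := hs.2.2 p hp
  have hpMV : p ∈ M ∩ Vs := ⟨hp, hpV⟩
  have hFp : F p = 0 := by
    have := hMV ▸ hpMV
    exact this.2
  have hFca : ContDiffAt ℝ (⊤:ℕ∞) F p := hFs.contDiffAt (hVo.mem_nhds hpV)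
  set L := fderiv ℝ F p with hL
  have hLu : L u = 0 := (hker p hpMV u).2 hu
  have hLν : L (ν p) ≠ 0 := by
    intro h0
    have : ν p ∈ tangAt ν p := (hker p hpMV (ν p)).1 h0
    have h1 : rI (ν p) (ν p) = 0 := this
    rw [rI_self, hs.2.1 p hp] at h1
    norm_num at h1
  set c := L (ν p) with hc
  -- the affine chart
  set dA : ℝ × ℝ →L[ℝ] E n :=
    (ContinuousLinearMap.fst ℝ ℝ ℝ).smulRight u + (ContinuousLinearMap.snd ℝ ℝ ℝ).smulRight (ν p) with hdA
  set A : ℝ × ℝ → E n := fun q => p + dA q with hA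
  have hA00 : A (0, 0) = p := by simp [hA]; exact map_zero dA
  have hA00' : A (0:ℝ×ℝ) = p := hA00
  have hAd : ∀ q, HasFDerivAt A dA q := fun q => (dA.hasFDerivAt).const_add p
  have hAsm : ContDiff ℝ (⊤:ℕ∞) A := contDiff_const.add dA.contDiff
  -- Φ and its strict derivative
  set Φ : ℝ × ℝ → ℝ × ℝ := fun q => (q.1, F (A q)) with hΦ
  have hΦca : ContDiffAt ℝ (⊤:ℕ∞) Φ (0, 0) := by
    apply ContDiffAt.prodMk contDiffAt_fst
    exact (hA00 ▸ hFca).comp _ hAsm.contDiffAt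
  have hΦs : HasStrictFDerivAt Φ (fderiv ℝ Φ (0,0)) (0,0) :=
    hΦca.hasStrictFDerivAt (by simp)
  -- compute the derivative
  have hFA : HasFDerivAt (fun q => F (A q)) (L.comp dA) (0,0) := by
    have h1 : HasFDerivAt F L p := hFca.differentiableAt (by simp) |>.hasFDerivAt
    exact (hA00 ▸ h1).comp (0,0) (hAd (0,0))
  have hΦd : HasFDerivAt Φ ((ContinuousLinearMap.fst ℝ ℝ ℝ).prod (L.comp dA)) (0,0) :=
    (ContinuousLinearMap.fst ℝ ℝ ℝ).hasFDerivAt.prodMk hFA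
  -- the equiv
  set e : (ℝ × ℝ) ≃L[ℝ] (ℝ × ℝ) :=
    (ContinuousLinearEquiv.refl ℝ ℝ).prodCongr (ContinuousLinearEquiv.unitsEquivAut ℝ (Units.mk0 c hLν)) with he
  have simpe : ∀ q : ℝ × ℝ, e q = (q.1, q.2 * c) := by
    intro q
    simp [e, ContinuousLinearEquiv.prodCongr_apply, ContinuousLinearEquiv.unitsEquivAut,
      ContinuousLinearEquiv.equivOfInverse_apply, ContinuousLinearMap.smulRight_apply,
      ContinuousLinearMap.one_apply, smul_eq_mul, Prod.map, mul_comm]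
  have hesymm : e.symm ((1:ℝ), (0:ℝ)) = (1, 0) := by
    have h1 : e ((1:ℝ), (0:ℝ)) = (1, 0) := by rw [simpe]; simp
    calc e.symm ((1:ℝ), (0:ℝ)) = e.symm (e ((1:ℝ), (0:ℝ))) := by rw [h1]
      _ = _ := e.symm_apply_apply _
  have heq : fderiv ℝ Φ (0,0) = (e : (ℝ × ℝ) →L[ℝ] (ℝ × ℝ)) := by
    rw [hΦd.fderiv]
    apply ContinuousLinearMap.ext
    intro q
    have hq : dA q = q.1 • u + q.2 • ν p := rfl
    rw [ContinuousLinearEquiv.coe_coe, simpe q]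
    simp [hq, map_add, map_smul, hLu, hc, smul_eq_mul, mul_comm]
  rw [heq] at hΦs
  -- local inverse
  set Ψ := hΦs.localInverse Φ e (0,0) with hΨ
  have hΦ00 : Φ (0,0) = (0,0) := by
    show ((0:ℝ), F (A (0,0))) = (0, 0)
    rw [hA00, hFp]
  have hΨs : HasStrictFDerivAt Ψ (e.symm : (ℝ × ℝ) →L[ℝ] (ℝ × ℝ)) (0,0) := by
    have := hΦs.to_localInverse (f := Φ) (f' := e) (a := (0,0))
    rwa [hΦ00] at this
  have hΨ00 : Ψ (0,0) = (0,0) := by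
    have := hΦs.localInverse_apply_image (f := Φ) (f' := e) (a := (0,0))
    rwa [hΦ00] at this
  have hrinv : ∀ᶠ y in nhds ((0:ℝ), (0:ℝ)), Φ (Ψ y) = y := by
    have := hΦs.eventually_right_inverse (f := Φ) (f' := e) (a := (0,0))
    rwa [hΦ00] at this
  -- the curve
  set γ : ℝ → E n := fun t => A (Ψ (t, 0)) with hγ
  have hj : HasFDerivAt (fun t : ℝ => (t, (0:ℝ))) (ContinuousLinearMap.inl ℝ ℝ ℝ) 0 :=
    (ContinuousLinearMap.inl ℝ ℝ ℝ).hasFDerivAt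
  have hΨc : HasFDerivAt (fun t : ℝ => Ψ (t, 0))
      ((e.symm : (ℝ × ℝ) →L[ℝ] (ℝ × ℝ)).comp (ContinuousLinearMap.inl ℝ ℝ ℝ)) 0 :=
    HasFDerivAt.comp (g := Ψ) (f := fun t : ℝ => (t, (0:ℝ))) 0 hΨs.hasFDerivAt hj
  have hγd : HasFDerivAt γ
      (dA.comp ((e.symm : (ℝ × ℝ) →L[ℝ] (ℝ × ℝ)).comp (ContinuousLinearMap.inl ℝ ℝ ℝ))) 0 :=
    HasFDerivAt.comp (g := A) (f := fun t : ℝ => Ψ (t, 0)) 0 (hAd (Ψ (0, 0))) hΨc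
  have hγ0 : γ 0 = p := by rw [hγ]; simp only []; rw [hΨ00, hA00]
  -- direction of the curve
  have hdir : (dA.comp ((e.symm : (ℝ × ℝ) →L[ℝ] (ℝ × ℝ)).comp (ContinuousLinearMap.inl ℝ ℝ ℝ))) 1 = u := by
    simp only [ContinuousLinearMap.comp_apply, ContinuousLinearMap.inl_apply,
      ContinuousLinearEquiv.coe_coe, hesymm]
    simp [hdA]
  -- γ eventually lies in M
  have hγcont : ContinuousAt γ 0 := hγd.continuousAt
  have hγM : ∀ᶠ t in nhds (0:ℝ), γ t ∈ M := by
    have h1 : ∀ᶠ t in nhds (0:ℝ), γ t ∈ Vs := by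
      have : Vs ∈ nhds p := hVo.mem_nhds hpV
      exact hγcont (hγ0 ▸ this)
    have h2 : ∀ᶠ t in nhds (0:ℝ), Φ (Ψ (t, 0)) = (t, 0) := by
      have hjc : Filter.Tendsto (fun t : ℝ => (t, (0:ℝ))) (nhds 0) (nhds (0,0)) := by
        have := hj.continuousAt
        exact this
      exact hjc.eventually hrinv
    filter_upwards [h1, h2] with t h1t h2t
    have hFγ : F (γ t) = 0 := by
      have : (Φ (Ψ (t, 0))).2 = F (γ t) := rfl
      rw [h2t] at this
      exact this.symm
    have : γ t ∈ {z ∈ Vs | F z = 0} := ⟨h1t, hFγ⟩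
    rw [← hMV] at this
    exact this.1
  -- conclude
  have hfγ : (fun t => f (γ t)) =ᶠ[nhds (0:ℝ)] (fun _ => 0) := by
    have h3 : ∀ᶠ t in nhds (0:ℝ), γ t ∈ {z | z ∈ M → f z = 0} := by
      have : {z | z ∈ M → f z = 0} ∈ nhds p := hf0
      exact hγcont (hγ0 ▸ this)
    filter_upwards [hγM, h3] with t h1t h2t
    exact h2t h1t
  have hcomp : HasFDerivAt (fun t => f (γ t))
      ((fderiv ℝ f p).comp (dA.comp ((e.symm : (ℝ × ℝ) →L[ℝ] (ℝ × ℝ)).comp (ContinuousLinearMap.inl ℝ ℝ ℝ)))) 0 := by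
    have h1 : HasFDerivAt f (fderiv ℝ f p) (γ 0) := by rw [hγ0]; exact hfd.hasFDerivAt
    exact HasFDerivAt.comp (g := f) (f := γ) 0 h1 hγd
  have hzero : fderiv ℝ (fun t => f (γ t)) 0 = 0 := by
    rw [hfγ.fderiv_eq]
    simp
  rw [hcomp.fderiv] at hzero
  have := congrArg (fun (T : ℝ →L[ℝ] G) => T 1) hzero
  simp only [ContinuousLinearMap.comp_apply, ContinuousLinearMap.zero_apply] at this
  rw [show ((ContinuousLinearMap.inl ℝ ℝ ℝ) (1:ℝ)) = ((1:ℝ), (0:ℝ)) from rfl] at this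
  rw [ContinuousLinearEquiv.coe_coe, hesymm] at this
  rw [show (dA ((1:ℝ), (0:ℝ))) = u from by simp [hdA]] at this
  exact this

end L1
-- MISC HELPERS
section Misc
variable {n : ℕ}

lemma gC_zero_right (v : CV n) : gC v 0 = 0 := by
  rw [gC_symm]; exact gC_zero_left v

lemma gC_split_right (v : CV n) (c d : E n) :
    gC v (c, d) = gC v (c, (0:E n)) + Complex.I * gC v (d, (0:E n)) := by
  rw [gC_symm, gC_split_left, gC_symm (c,(0:E n)) v, gC_symm (d,(0:E n)) v]

lemma gC_real_smul_right (v : CV n) (r : ℝ) (c d : E n) :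
    gC v (r • c, r • d) = r * gC v (c, d) := by
  obtain ⟨a, b⟩ := v
  simp [gC, rI_smul_right, Complex.ext_iff]
  constructor <;> ring

-- pairing of a J-twisted vector with antiholomorphic pair
lemma gC_Jpair_antiholo (a b Y : E n) :
    gC (J a, J b) (Y, J Y) = Complex.I * gC (a, b) (Y, J Y) := by
  simp only [gC, Complex.ext_iff, rI_J_J]
  rw [rI_J_left a Y, rI_J_left b Y]
  simp [Complex.ext_iff]
  constructor <;> ring

-- pairing of holomorphic-form vector with J-twisted vector
lemma rI_J_right (x y : E n) : rI x (J y) = - rI (J x) y := by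
  rw [rI_J_left]; ring

lemma gC_holo_Jright (x a b : E n) :
    gC (x, -J x) (J a, J b) = -(Complex.I * gC (x, -J x) (a, b)) := by
  simp only [gC, Complex.ext_iff, rI_neg_left, rI_J_J, rI_J_right, J_J, rI_neg_right,
    Complex.add_re, Complex.add_im, Complex.mul_re, Complex.mul_im, Complex.ofReal_re,
    Complex.ofReal_im, Complex.I_re, Complex.I_im, Complex.neg_re, Complex.neg_im, J_neg]
  constructor <;> ring

lemma csmul_zero (v : CV n) : csmul 0 v = 0 := by
  simp [csmul]

lemma DD_const {p : E n} (w u : CV n) : DD (fun _ => w) u p = 0 := by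
  simp [DD]

lemma dC_const {p : E n} (u : CV n) (c : ℂ) : dC (fun _ => c) u p = 0 := by
  simp [dC]

lemma fderiv_J_apply {f : E n → E n} {p : E n} (hf : DifferentiableAt ℝ f p) (d : E n) :
    fderiv ℝ (fun z => J (f z)) p d = J (fderiv ℝ f p d) := by
  have h : HasFDerivAt (fun z => J (f z)) ((JL n).comp (fderiv ℝ f p)) p :=
    (JL n).hasFDerivAt.comp p hf.hasFDerivAt
  rw [h.fderiv]
  rfl

lemma diffAt_J {f : E n → E n} {p : E n} (hf : DifferentiableAt ℝ f p) :
    DifferentiableAt ℝ (fun z => J (f z)) p := ((JL n).differentiableAt).comp p hf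

lemma sqrt2_fact : (2:ℝ) * (Real.sqrt 2)⁻¹ = Real.sqrt 2 := by
  rw [show (2:ℝ) = Real.sqrt 2 * Real.sqrt 2 from (Real.mul_self_sqrt (by norm_num)).symm]
  field_simp
  rw [Real.sqrt_sq (Real.sqrt_nonneg 2)]

lemma sqrt2_inv_mul : (Real.sqrt 2)⁻¹ * Real.sqrt 2 = 1 := by
  have : Real.sqrt 2 ≠ 0 := by positivity
  field_simp

-- complexified vanishing along complexified tangent directions
lemma dC_vanish {M : Set (E n)} {ν : E n → E n} (hs : IsHypersurface M ν)
    {f : E n → ℂ} {p : E n} (hp : p ∈ M) (hfd : DifferentiableAt ℝ f p)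
    (hf0 : ∀ z ∈ M, f z = 0) {u : CV n}
    (h1 : rI (ν p) u.1 = 0) (h2 : rI (ν p) u.2 = 0) : dC f u p = 0 := by
  rw [dC, tangent_fderiv hs hp hfd (Filter.Eventually.of_forall hf0) h1,
    tangent_fderiv hs hp hfd (Filter.Eventually.of_forall hf0) h2]
  simp

lemma DD_vanish {M : Set (E n)} {ν : E n → E n} (hs : IsHypersurface M ν)
    {A B : E n → CV n} {p : E n} (hp : p ∈ M)
    (hA1 : DifferentiableAt ℝ (fun z => (A z).1) p) (hA2 : DifferentiableAt ℝ (fun z => (A z).2) p)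
    (hB1 : DifferentiableAt ℝ (fun z => (B z).1) p) (hB2 : DifferentiableAt ℝ (fun z => (B z).2) p)
    (h0 : ∀ z ∈ M, A z = B z) {u : CV n}
    (h1 : rI (ν p) u.1 = 0) (h2 : rI (ν p) u.2 = 0) :
    DD A u p = DD B u p := by
  have k1 : ∀ d : E n, rI (ν p) d = 0 →
      fderiv ℝ (fun z => (A z).1) p d = fderiv ℝ (fun z => (B z).1) p d := by
    intro d hd
    have hv : ∀ z ∈ M, ((fun z => (A z).1 - (B z).1) z) = 0 := by
      intro z hz; simp [h0 z hz]
    have := tangent_fderiv hs hp (hA1.fun_sub hB1) (Filter.Eventually.of_forall hv) hd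
    rw [fderiv_fun_sub hA1 hB1] at this
    simpa [sub_eq_zero] using this
  have k2 : ∀ d : E n, rI (ν p) d = 0 →
      fderiv ℝ (fun z => (A z).2) p d = fderiv ℝ (fun z => (B z).2) p d := by
    intro d hd
    have hv : ∀ z ∈ M, ((fun z => (A z).2 - (B z).2) z) = 0 := by
      intro z hz; simp [h0 z hz]
    have := tangent_fderiv hs hp (hA2.fun_sub hB2) (Filter.Eventually.of_forall hv) hd
    rw [fderiv_fun_sub hA2 hB2] at this
    simpa [sub_eq_zero] using this
  simp only [DD, k1 u.1 h1, k1 u.2 h2, k2 u.1 h1, k2 u.2 h2]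

end Misc
-- SMOOTHNESS ARSENAL
section Smooth
variable {n : ℕ}

lemma contDiff_horR {ν f : E n → E n} (hν : ContDiff ℝ (⊤:ℕ∞) ν) (hf : ContDiff ℝ (⊤:ℕ∞) f) :
    ContDiff ℝ (⊤:ℕ∞) (fun z => horR ν z (f z)) := by
  unfold horR
  exact (hf.sub ((contDiff_rI hν hf).smul hν)).sub
    ((contDiff_rI (contDiff_J hν) hf).smul (contDiff_J hν))

lemma contDiff_PiH1 {ν : E n → E n} (hν : ContDiff ℝ (⊤:ℕ∞) ν) {A : E n → CV n}
    (hA1 : ContDiff ℝ (⊤:ℕ∞) (fun z => (A z).1)) (hA2 : ContDiff ℝ (⊤:ℕ∞) (fun z => (A z).2)) :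
    ContDiff ℝ (⊤:ℕ∞) (fun z => (PiH ν z (A z)).1) := by
  unfold PiH
  exact (contDiff_const (c := (2:ℝ)⁻¹)).smul ((contDiff_horR hν hA1).add (contDiff_J (contDiff_horR hν hA2)))

lemma contDiff_PiH2 {ν : E n → E n} (hν : ContDiff ℝ (⊤:ℕ∞) ν) {A : E n → CV n}
    (hA1 : ContDiff ℝ (⊤:ℕ∞) (fun z => (A z).1)) (hA2 : ContDiff ℝ (⊤:ℕ∞) (fun z => (A z).2)) :
    ContDiff ℝ (⊤:ℕ∞) (fun z => (PiH ν z (A z)).2) := by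
  unfold PiH
  exact (contDiff_const (c := (2:ℝ)⁻¹)).smul ((contDiff_horR hν hA2).sub (contDiff_J (contDiff_horR hν hA1)))

lemma contDiff_PiHb1 {ν : E n → E n} (hν : ContDiff ℝ (⊤:ℕ∞) ν) {A : E n → CV n}
    (hA1 : ContDiff ℝ (⊤:ℕ∞) (fun z => (A z).1)) (hA2 : ContDiff ℝ (⊤:ℕ∞) (fun z => (A z).2)) :
    ContDiff ℝ (⊤:ℕ∞) (fun z => (PiHb ν z (A z)).1) := by
  unfold PiHb
  exact (contDiff_const (c := (2:ℝ)⁻¹)).smul ((contDiff_horR hν hA1).sub (contDiff_J (contDiff_horR hν hA2)))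

lemma contDiff_PiHb2 {ν : E n → E n} (hν : ContDiff ℝ (⊤:ℕ∞) ν) {A : E n → CV n}
    (hA1 : ContDiff ℝ (⊤:ℕ∞) (fun z => (A z).1)) (hA2 : ContDiff ℝ (⊤:ℕ∞) (fun z => (A z).2)) :
    ContDiff ℝ (⊤:ℕ∞) (fun z => (PiHb ν z (A z)).2) := by
  unfold PiHb
  exact (contDiff_const (c := (2:ℝ)⁻¹)).smul ((contDiff_horR hν hA2).add (contDiff_J (contDiff_horR hν hA1)))

lemma contDiff_DD1 {A Df : E n → CV n}
    (hA1 : ContDiff ℝ (⊤:ℕ∞) (fun z => (A z).1)) (hA2 : ContDiff ℝ (⊤:ℕ∞) (fun z => (A z).2))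
    (hD1 : ContDiff ℝ (⊤:ℕ∞) (fun z => (Df z).1)) (hD2 : ContDiff ℝ (⊤:ℕ∞) (fun z => (Df z).2)) :
    ContDiff ℝ (⊤:ℕ∞) (fun z => (DD A (Df z) z).1) := by
  unfold DD
  exact (contDiff_fderiv_apply hA1 hD1).sub (contDiff_fderiv_apply hA2 hD2)

lemma contDiff_DD2 {A Df : E n → CV n}
    (hA1 : ContDiff ℝ (⊤:ℕ∞) (fun z => (A z).1)) (hA2 : ContDiff ℝ (⊤:ℕ∞) (fun z => (A z).2))
    (hD1 : ContDiff ℝ (⊤:ℕ∞) (fun z => (Df z).1)) (hD2 : ContDiff ℝ (⊤:ℕ∞) (fun z => (Df z).2)) :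
    ContDiff ℝ (⊤:ℕ∞) (fun z => (DD A (Df z) z).2) := by
  unfold DD
  exact (contDiff_fderiv_apply hA1 hD2).add (contDiff_fderiv_apply hA2 hD1)

lemma contDiff_re {c : E n → ℂ} (hc : ContDiff ℝ (⊤:ℕ∞) c) :
    ContDiff ℝ (⊤:ℕ∞) (fun z => (c z).re) := Complex.reCLM.contDiff.comp hc
lemma contDiff_im {c : E n → ℂ} (hc : ContDiff ℝ (⊤:ℕ∞) c) :
    ContDiff ℝ (⊤:ℕ∞) (fun z => (c z).im) := Complex.imCLM.contDiff.comp hc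

lemma contDiff_csmul1 {c : E n → ℂ} {B : E n → CV n} (hc : ContDiff ℝ (⊤:ℕ∞) c)
    (hB1 : ContDiff ℝ (⊤:ℕ∞) (fun z => (B z).1)) (hB2 : ContDiff ℝ (⊤:ℕ∞) (fun z => (B z).2)) :
    ContDiff ℝ (⊤:ℕ∞) (fun z => (csmul (c z) (B z)).1) := by
  unfold csmul
  exact ((contDiff_re hc).smul hB1).sub ((contDiff_im hc).smul hB2)

lemma contDiff_csmul2 {c : E n → ℂ} {B : E n → CV n} (hc : ContDiff ℝ (⊤:ℕ∞) c)
    (hB1 : ContDiff ℝ (⊤:ℕ∞) (fun z => (B z).1)) (hB2 : ContDiff ℝ (⊤:ℕ∞) (fun z => (B z).2)) :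
    ContDiff ℝ (⊤:ℕ∞) (fun z => (csmul (c z) (B z)).2) := by
  unfold csmul
  exact ((contDiff_re hc).smul hB2).add ((contDiff_im hc).smul hB1)

lemma contDiff_NF1 {ν : E n → E n} (hν : ContDiff ℝ (⊤:ℕ∞) ν) :
    ContDiff ℝ (⊤:ℕ∞) (fun z => (NF ν z).1) := by
  unfold NF
  exact (contDiff_const (c := (Real.sqrt 2)⁻¹)).smul hν
lemma contDiff_NF2 {ν : E n → E n} (hν : ContDiff ℝ (⊤:ℕ∞) ν) :
    ContDiff ℝ (⊤:ℕ∞) (fun z => (NF ν z).2) := by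
  unfold NF
  exact ((contDiff_const (c := (Real.sqrt 2)⁻¹)).smul (contDiff_J hν)).neg
lemma contDiff_TF1 {ν : E n → E n} (hν : ContDiff ℝ (⊤:ℕ∞) ν) :
    ContDiff ℝ (⊤:ℕ∞) (fun z => (TF ν z).1) := contDiff_J hν
lemma contDiff_TF2 {ν : E n → E n} (hν : ContDiff ℝ (⊤:ℕ∞) ν) :
    ContDiff ℝ (⊤:ℕ∞) (fun z => (TF ν z).2) := contDiff_const

lemma contDiff_dC_field {f : E n → ℂ} (hf : ContDiff ℝ (⊤:ℕ∞) f) {Df : E n → CV n}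
    (hD1 : ContDiff ℝ (⊤:ℕ∞) (fun z => (Df z).1)) (hD2 : ContDiff ℝ (⊤:ℕ∞) (fun z => (Df z).2)) :
    ContDiff ℝ (⊤:ℕ∞) (fun z => dC f (Df z) z) := by
  unfold dC
  exact ((hf.fderiv_right (by simp)).clm_apply hD1).add
    (contDiff_const.mul ((hf.fderiv_right (by simp)).clm_apply hD2))

lemma contDiff_gC_const {A : E n → CV n} (w : CV n)
    (hA1 : ContDiff ℝ (⊤:ℕ∞) (fun z => (A z).1)) (hA2 : ContDiff ℝ (⊤:ℕ∞) (fun z => (A z).2)) :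
    ContDiff ℝ (⊤:ℕ∞) (fun z => gC (A z) w) :=
  contDiff_gC hA1 hA2 (contDiff_const (c := w.1)) (contDiff_const (c := w.2))

lemma contDiff_nabla1 {ν : E n → E n} (hν : ContDiff ℝ (⊤:ℕ∞) ν) {A Df : E n → CV n}
    (hA1 : ContDiff ℝ (⊤:ℕ∞) (fun z => (A z).1)) (hA2 : ContDiff ℝ (⊤:ℕ∞) (fun z => (A z).2))
    (hD1 : ContDiff ℝ (⊤:ℕ∞) (fun z => (Df z).1)) (hD2 : ContDiff ℝ (⊤:ℕ∞) (fun z => (Df z).2)) :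
    (ContDiff ℝ (⊤:ℕ∞) (fun z => (nabla ν A (Df z) z).1))
      ∧ (ContDiff ℝ (⊤:ℕ∞) (fun z => (nabla ν A (Df z) z).2)) := by
  have hPA1 := contDiff_PiH1 hν hA1 hA2
  have hPA2 := contDiff_PiH2 hν hA1 hA2
  have hPB1 := contDiff_PiHb1 hν hA1 hA2
  have hPB2 := contDiff_PiHb2 hν hA1 hA2
  have hDD1 := contDiff_DD1 (A := fun z => PiH ν z (A z)) hPA1 hPA2 hD1 hD2
  have hDD2 := contDiff_DD2 (A := fun z => PiH ν z (A z)) hPA1 hPA2 hD1 hD2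
  have hDDb1 := contDiff_DD1 (A := fun z => PiHb ν z (A z)) hPB1 hPB2 hD1 hD2
  have hDDb2 := contDiff_DD2 (A := fun z => PiHb ν z (A z)) hPB1 hPB2 hD1 hD2
  have hN1 := contDiff_NF1 hν
  have hN2 := contDiff_NF2 hν
  have hNc1 : ContDiff ℝ (⊤:ℕ∞) (fun z => (conjCV (NF ν z)).1) := hN1
  have hNc2 : ContDiff ℝ (⊤:ℕ∞) (fun z => (conjCV (NF ν z)).2) := hN2.neg
  have hc1 : ContDiff ℝ (⊤:ℕ∞) (fun z => gC (DD (fun y => PiH ν y (A y)) (Df z) z) (conjCV (NF ν z))) :=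
    contDiff_gC hDD1 hDD2 hNc1 hNc2
  have hc2 : ContDiff ℝ (⊤:ℕ∞) (fun z => gC (DD (fun y => PiHb ν y (A y)) (Df z) z) (NF ν z)) :=
    contDiff_gC hDDb1 hDDb2 hN1 hN2
  have hf : ContDiff ℝ (⊤:ℕ∞) (fun z => gC (A z) (TF ν z)) :=
    contDiff_gC hA1 hA2 (contDiff_TF1 hν) (contDiff_TF2 hν)
  have hdc : ContDiff ℝ (⊤:ℕ∞) (fun z => dC (fun y => gC (A y) (TF ν y)) (Df z) z) :=
    contDiff_dC_field hf hD1 hD2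
  unfold nabla
  constructor
  · exact (((hDD1.sub (contDiff_csmul1 hc1 hN1 hN2)).add
      (hDDb1.sub (contDiff_csmul1 hc2 hNc1 hNc2))).add
      (contDiff_csmul1 hdc (contDiff_TF1 hν) (contDiff_TF2 hν)))
  · exact (((hDD2.sub (contDiff_csmul2 hc1 hN1 hN2)).add
      (hDDb2.sub (contDiff_csmul2 hc2 hNc1 hNc2))).add
      (contDiff_csmul2 hdc (contDiff_TF1 hν) (contDiff_TF2 hν)))

end Smooth
-- CORE LEMMAS
section Core
variable {n : ℕ}

/-- symmetry of complexified second derivatives (flatness of D). -/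
lemma schwarz {g : E n → ℂ} (hg : ContDiff ℝ (⊤:ℕ∞) g) {Zf Wf : E n → CV n} {p : E n}
    (hZ1 : DifferentiableAt ℝ (fun z => (Zf z).1) p) (hZ2 : DifferentiableAt ℝ (fun z => (Zf z).2) p)
    (hW1 : DifferentiableAt ℝ (fun z => (Wf z).1) p) (hW2 : DifferentiableAt ℝ (fun z => (Wf z).2) p) :
    dC (fun z => dC g (Wf z) z) (Zf p) p - dC (fun z => dC g (Zf z) z) (Wf p) p
      = dC g (bracket Zf Wf p) p := by
  have hgd : Differentiable ℝ g := hg.differentiable (by simp)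
  have hDg : ContDiff ℝ (⊤:ℕ∞) (fderiv ℝ g) := hg.fderiv_right (by simp)
  have hDgd : DifferentiableAt ℝ (fderiv ℝ g) p := (hDg.differentiable (by simp)).differentiableAt
  have hsym : ∀ v w : E n, (fderiv ℝ (fderiv ℝ g) p) v w = (fderiv ℝ (fderiv ℝ g) p) w v :=
    second_derivative_symmetric (fun y => (hgd y).hasFDerivAt) hDgd.hasFDerivAt
  -- derivative of z ↦ Dg z (w z)
  have key : ∀ (w : E n → E n), DifferentiableAt ℝ w p → ∀ d : E n,
      fderiv ℝ (fun z => fderiv ℝ g z (w z)) p d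
        = (fderiv ℝ (fderiv ℝ g) p d) (w p) + fderiv ℝ g p (fderiv ℝ w p d) := by
    intro w hw d
    have h := hDgd.hasFDerivAt.clm_apply hw.hasFDerivAt
    rw [h.fderiv]
    simp [ContinuousLinearMap.add_apply, ContinuousLinearMap.comp_apply,
      ContinuousLinearMap.flip_apply]
    ring
  have keydiff : ∀ (w : E n → E n), DifferentiableAt ℝ w p →
      DifferentiableAt ℝ (fun z => fderiv ℝ g z (w z)) p := by
    intro w hw
    exact hDgd.clm_apply hw
  -- expand the two iterated dC's
  have expand : ∀ (Df : E n → CV n), DifferentiableAt ℝ (fun z => (Df z).1) p →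
      DifferentiableAt ℝ (fun z => (Df z).2) p → ∀ u : CV n,
      dC (fun z => dC g (Df z) z) u p
        = ((fderiv ℝ (fderiv ℝ g) p u.1) ((Df p).1) + fderiv ℝ g p (fderiv ℝ (fun z => (Df z).1) p u.1)
            + Complex.I * ((fderiv ℝ (fderiv ℝ g) p u.1) ((Df p).2)
                + fderiv ℝ g p (fderiv ℝ (fun z => (Df z).2) p u.1)))
          + Complex.I * ((fderiv ℝ (fderiv ℝ g) p u.2) ((Df p).1)
                + fderiv ℝ g p (fderiv ℝ (fun z => (Df z).1) p u.2)
            + Complex.I * ((fderiv ℝ (fderiv ℝ g) p u.2) ((Df p).2)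
                + fderiv ℝ g p (fderiv ℝ (fun z => (Df z).2) p u.2))) := by
    intro Df hD1 hD2 u
    have hfun : (fun z => dC g (Df z) z)
        = fun z => fderiv ℝ g z ((Df z).1) + Complex.I * fderiv ℝ g z ((Df z).2) := rfl
    have hd1 := keydiff _ hD1
    have hd2 := keydiff _ hD2
    rw [dC, hfun]
    rw [fderiv_fun_add hd1 ((differentiableAt_const _).fun_mul hd2),
        fderiv_const_mul hd2 Complex.I]
    simp only [ContinuousLinearMap.add_apply, ContinuousLinearMap.smul_apply, smul_eq_mul]
    rw [key _ hD1 u.1, key _ hD2 u.1, key _ hD1 u.2, key _ hD2 u.2]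
  rw [expand Wf hW1 hW2 (Zf p), expand Zf hZ1 hZ2 (Wf p)]
  have hbr : dC g (bracket Zf Wf p) p
      = fderiv ℝ g p ((DD Wf (Zf p) p).1) - fderiv ℝ g p ((DD Zf (Wf p) p).1)
        + Complex.I * (fderiv ℝ g p ((DD Wf (Zf p) p).2) - fderiv ℝ g p ((DD Zf (Wf p) p).2)) := by
    rw [dC]
    have h1 : (bracket Zf Wf p).1 = (DD Wf (Zf p) p).1 - (DD Zf (Wf p) p).1 := rfl
    have h2 : (bracket Zf Wf p).2 = (DD Wf (Zf p) p).2 - (DD Zf (Wf p) p).2 := rfl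
    rw [h1, h2, map_sub, map_sub]
  rw [hbr]
  simp only [DD, map_sub, map_add]
  linear_combination hsym (Zf p).1 (Wf p).1 + Complex.I * hsym (Zf p).1 (Wf p).2
    + Complex.I * hsym (Zf p).2 (Wf p).1 - hsym (Zf p).2 (Wf p).2
    + (Complex.I * Complex.I - 1) * (0:ℂ)
    + ((fderiv ℝ (fderiv ℝ g) p (Zf p).2) ((Wf p).2)
        + fderiv ℝ g p (fderiv ℝ (fun z => (Wf z).2) p (Zf p).2)
        - ((fderiv ℝ (fderiv ℝ g) p (Wf p).2) ((Zf p).2)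
        + fderiv ℝ g p (fderiv ℝ (fun z => (Zf z).2) p (Wf p).2))) * Complex.I_sq

-- pointwise facts for holomorphic fields on M
lemma holo_facts {M : Set (E n)} {ν : E n → E n} {U : E n → CV n}
    (hU : IsHoloField M ν U) {z : E n} (hz : z ∈ M) :
    rI (ν z) ((U z).1) = 0 ∧ rI (ν z) (J ((U z).1)) = 0 := by
  have h := hU.2.2 z hz
  constructor
  · show (inner ℂ (ν z) ((U z).1) : ℂ).re = 0
    rw [h]; simp
  · show (inner ℂ (ν z) (J ((U z).1)) : ℂ).re = 0
    show (inner ℂ (ν z) (Complex.I • (U z).1) : ℂ).re = 0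
    rw [inner_smul_right, h]; simp

lemma horR_tang {ν : E n → E n} {z : E n} {x : E n}
    (h1 : rI (ν z) x = 0) (h2 : rI (ν z) (J x) = 0) : horR ν z x = x := by
  unfold horR
  rw [show rI (ν z) x = 0 from h1, show rI (J (ν z)) x = 0 from by rw [rI_J_left, h2, neg_zero]]
  simp

lemma half_two (x : E n) : (2:ℝ)⁻¹ • (x + x) = x := by
  rw [← two_smul ℝ x, smul_smul]
  norm_num

-- on M a holomorphic tangent field is its own holomorphic projection
lemma PiH_of_holo {M : Set (E n)} {ν : E n → E n} {U : E n → CV n}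
    (hU : IsHoloField M ν U) {z : E n} (hz : z ∈ M) :
    PiH ν z (U z) = U z ∧ PiHb ν z (U z) = 0 ∧ gC (U z) (TF ν z) = 0 := by
  obtain ⟨f1, f2⟩ := holo_facts hU hz
  have hx2 : (U z).2 = -J ((U z).1) := hU.2.1 z
  have e1 : horR ν z ((U z).1) = (U z).1 := horR_tang f1 f2
  have e2 : horR ν z ((U z).2) = (U z).2 := by
    rw [hx2]
    exact horR_tang (by rw [rI_neg_right, f2, neg_zero])
      (by rw [J_neg, rI_neg_right, J_J, rI_neg_right, f1]; ring)
  refine ⟨?_, ?_, ?_⟩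
  · have : PiH ν z (U z) = ((2:ℝ)⁻¹ • ((U z).1 + J ((U z).2)), (2:ℝ)⁻¹ • ((U z).2 - J ((U z).1))) := by
      unfold PiH; rw [e1, e2]
    rw [this, hx2]
    refine Prod.ext ?_ ?_
    · show (2:ℝ)⁻¹ • ((U z).1 + J (-J ((U z).1))) = (U z).1
      rw [J_neg, J_J, neg_neg]
      exact half_two _
    · rw [hx2]
      show (2:ℝ)⁻¹ • (-J ((U z).1) - J ((U z).1)) = -J ((U z).1)
      rw [sub_eq_add_neg, ← neg_add]
      rw [show ((2:ℝ)⁻¹ • -(J ((U z).1) + J ((U z).1))) = -((2:ℝ)⁻¹ • (J ((U z).1) + J ((U z).1))) from by rw [smul_neg]]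
      rw [half_two]
  · have : PiHb ν z (U z) = ((2:ℝ)⁻¹ • ((U z).1 - J ((U z).2)), (2:ℝ)⁻¹ • ((U z).2 + J ((U z).1))) := by
      unfold PiHb; rw [e1, e2]
    rw [this, hx2]
    refine Prod.ext ?_ ?_
    · show (2:ℝ)⁻¹ • ((U z).1 - J (-J ((U z).1))) = (0 : CV n).1
      rw [J_neg, J_J, neg_neg, sub_self, smul_zero]; rfl
    · show (2:ℝ)⁻¹ • (-J ((U z).1) + J ((U z).1)) = (0 : CV n).2
      rw [neg_add_cancel, smul_zero]; rfl
  · show gC ((U z).1, (U z).2) (J (ν z), (0:E n)) = 0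
    rw [hx2]
    simp only [gC, Complex.ext_iff, rI_zero_right, rI_neg_left]
    rw [rI_J_right ((U z).1) (ν z), rI_J_J]
    rw [rI_comm (J ((U z).1)) (ν z), f2, rI_comm ((U z).1) (ν z), f1]
    norm_num

end Core
-- NAB, T1, T2, MF
section Core2
variable {n : ℕ}

lemma holo_snd {M : Set (E n)} {ν : E n → E n} {U : E n → CV n} (hU : IsHoloField M ν U) :
    ContDiff ℝ (⊤:ℕ∞) (fun z => (U z).2) := by
  have : (fun z => (U z).2) = fun z => -J ((U z).1) := funext (hU.2.1)
  rw [this]; exact (contDiff_J hU.1).neg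

lemma NAB {M : Set (E n)} {ν : E n → E n} {U : E n → CV n}
    (hs : IsHypersurface M ν) (hU : IsHoloField M ν U) {q : E n} (hq : q ∈ M) {u : CV n}
    (hu1 : rI (ν q) u.1 = 0) (hu2 : rI (ν q) u.2 = 0) :
    nabla ν U u q = DD U u q - csmul (gC (DD U u q) (conjCV (NF ν q))) (NF ν q) := by
  have hν := hs.1
  have hU1 : ContDiff ℝ (⊤:ℕ∞) (fun z => (U z).1) := hU.1
  have hU2 := holo_snd hU
  have ha : DD (fun z => PiH ν z (U z)) u q = DD U u q :=
    DD_vanish hs hq (cdiff (contDiff_PiH1 hν hU1 hU2) q) (cdiff (contDiff_PiH2 hν hU1 hU2) q)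
      (cdiff hU1 q) (cdiff hU2 q) (fun z hz => (PiH_of_holo hU hz).1) hu1 hu2
  have hb : DD (fun z => PiHb ν z (U z)) u q = 0 := by
    have h := DD_vanish hs hq (cdiff (contDiff_PiHb1 hν hU1 hU2) q)
      (cdiff (contDiff_PiHb2 hν hU1 hU2) q)
      (B := fun _ => (0 : CV n)) (differentiableAt_const _) (differentiableAt_const _)
      (fun z hz => (PiH_of_holo hU hz).2.1) hu1 hu2
    rw [h, DD_const]
  have hc : dC (fun z => gC (U z) (TF ν z)) u q = 0 :=
    dC_vanish hs hq (diffAt_gC (cdiff hU1 q) (cdiff hU2 q) (cdiff (contDiff_TF1 hν) q)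
      (cdiff (contDiff_TF2 hν) q)) (fun z hz => (PiH_of_holo hU hz).2.2) hu1 hu2
  unfold nabla
  rw [ha, hb, hc, gC_zero_left, csmul_zero, csmul_zero]
  abel

lemma T1 {M : Set (E n)} {ν : E n → E n} {U : E n → CV n}
    (hs : IsHypersurface M ν) (hU : IsHoloField M ν U) {p : E n} (hp : p ∈ M) (u : CV n) :
    dC (fun z => gC (U z) ((ν z, (0:E n)))) u p
      = gC (DD U u p) ((ν p, (0:E n))) + hC ν p (U p) u := by
  have hν := hs.1
  have hU1 : ContDiff ℝ (⊤:ℕ∞) (fun z => (U z).1) := hU.1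
  have hU2 := holo_snd hU
  have hB1 : DifferentiableAt ℝ (fun z => (((ν z, (0:E n)) : CV n)).1) p := cdiff hν p
  have hB2 : DifferentiableAt ℝ (fun z => (((ν z, (0:E n)) : CV n)).2) p := differentiableAt_const _
  have h := dC_gC_fields (A := U) (B := fun z => ((ν z, (0:E n)) : CV n)) u
    (cdiff hU1 p) (cdiff hU2 p) hB1 hB2
  have hDDB : DD (fun z => ((ν z, (0:E n)) : CV n)) u p = (fderiv ℝ ν p u.1, fderiv ℝ ν p u.2) := by
    unfold DD
    have e1 : (fun z => (((ν z, (0:E n)) : CV n)).1) = ν := rfl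
    have e2 : (fun z => (((ν z, (0:E n)) : CV n)).2) = fun _ => (0:E n) := rfl
    rw [e1, e2, fderiv_fun_const]
    simp only [Pi.zero_apply, ContinuousLinearMap.zero_apply, sub_zero, add_zero]
  rw [h, hDDB]
  rfl

lemma T1M {M : Set (E n)} {ν : E n → E n} {U : E n → CV n}
    (hs : IsHypersurface M ν) (hU : IsHoloField M ν U) {p : E n} (hp : p ∈ M) {u : CV n}
    (hu1 : rI (ν p) u.1 = 0) (hu2 : rI (ν p) u.2 = 0) :
    gC (DD U u p) ((ν p, (0:E n))) = - hC ν p (U p) u := by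
  have hν := hs.1
  have hvan : ∀ z ∈ M, gC (U z) ((ν z, (0:E n))) = 0 := by
    intro z hz
    obtain ⟨f1, f2⟩ := holo_facts hU hz
    have hx2 : (U z).2 = -J ((U z).1) := hU.2.1 z
    show gC ((U z).1, (U z).2) ((ν z, (0:E n))) = 0
    rw [hx2]
    simp only [gC, Complex.ext_iff, rI_zero_right, rI_neg_left]
    rw [rI_comm ((U z).1) (ν z), f1, rI_comm (J ((U z).1)) (ν z), f2]
    norm_num
  have hd : DifferentiableAt ℝ (fun z => gC (U z) (((ν z, (0:E n)) : CV n))) p :=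
    diffAt_gC (A := U) (B := fun z => ((ν z, (0:E n)) : CV n)) (cdiff hU.1 p)
      (cdiff (holo_snd hU) p) (cdiff hν p) (differentiableAt_const _)
  have hz := dC_vanish hs hp hd hvan hu1 hu2
  have h1 := T1 hs hU hp u
  rw [hz] at h1
  linear_combination -h1

lemma T2M {M : Set (E n)} {ν : E n → E n} {U : E n → CV n}
    (hs : IsHypersurface M ν) (hU : IsHoloField M ν U) {p : E n} (hp : p ∈ M) {u : CV n}
    (hu1 : rI (ν p) u.1 = 0) (hu2 : rI (ν p) u.2 = 0) :
    gC (DD U u p) ((J (ν p), (0:E n))) = Complex.I * hC ν p (U p) u := by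
  have hν := hs.1
  have hU1 : ContDiff ℝ (⊤:ℕ∞) (fun z => (U z).1) := hU.1
  have hU2 := holo_snd hU
  have hB1 : DifferentiableAt ℝ (fun z => (((J (ν z), (0:E n)) : CV n)).1) p :=
    cdiff (contDiff_J hν) p
  have hB2 : DifferentiableAt ℝ (fun z => (((J (ν z), (0:E n)) : CV n)).2) p :=
    differentiableAt_const _
  have h := dC_gC_fields (A := U) (B := fun z => ((J (ν z), (0:E n)) : CV n)) u
    (cdiff hU1 p) (cdiff hU2 p) hB1 hB2
  have hDDB : DD (fun z => ((J (ν z), (0:E n)) : CV n)) u p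
      = (J (fderiv ℝ ν p u.1), J (fderiv ℝ ν p u.2)) := by
    unfold DD
    have e1 : (fun z => (((J (ν z), (0:E n)) : CV n)).1) = fun z => J (ν z) := rfl
    have e2 : (fun z => (((J (ν z), (0:E n)) : CV n)).2) = fun _ => (0:E n) := rfl
    rw [e1, e2, fderiv_fun_const]
    simp only [Pi.zero_apply, ContinuousLinearMap.zero_apply, sub_zero, add_zero]
    rw [fderiv_J_apply (cdiff hν p) u.1, fderiv_J_apply (cdiff hν p) u.2]
  have hvan : ∀ z ∈ M, gC (U z) (((J (ν z), (0:E n)) : CV n)) = 0 :=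
    fun z hz => (PiH_of_holo hU hz).2.2
  have hd : DifferentiableAt ℝ (fun z => gC (U z) (((J (ν z), (0:E n)) : CV n))) p :=
    diffAt_gC (A := U) (B := fun z => ((J (ν z), (0:E n)) : CV n)) (cdiff hU.1 p)
      (cdiff hU2 p) hB1 hB2
  have hz := dC_vanish hs hp hd hvan hu1 hu2
  rw [hz, hDDB] at h
  have hUp : U p = ((U p).1, -J ((U p).1)) := Prod.ext rfl (hU.2.1 p)
  have hJr : gC (U p) (J (fderiv ℝ ν p u.1), J (fderiv ℝ ν p u.2))
      = -(Complex.I * hC ν p (U p) u) := by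
    rw [hUp, gC_holo_Jright]
    rfl
  rw [hJr] at h
  linear_combination -h

lemma MF {ν : E n → E n} (hν : ContDiff ℝ (⊤:ℕ∞) ν) {p : E n} {Y : E n}
    (hY1 : rI (ν p) Y = 0) (hY2 : rI (ν p) (J Y) = 0)
    {A : E n → CV n} (hA1 : ContDiff ℝ (⊤:ℕ∞) (fun z => (A z).1))
    (hA2 : ContDiff ℝ (⊤:ℕ∞) (fun z => (A z).2)) (u : CV n) :
    gC (nabla ν A u p) (Y, J Y)
      = dC (fun z => gC (A z) (Y, J Y)) u p
        - gC ((ν p, (0:E n))) (A p) * dC (fun z => gC ((ν z, (0:E n))) (Y, J Y)) u p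
        - gC ((J (ν p), (0:E n))) (A p) * dC (fun z => gC ((J (ν z), (0:E n))) (Y, J Y)) u p := by
  have hb3 : rI (J (ν p)) Y = 0 := by rw [rI_J_left, hY2, neg_zero]
  have hb4 : rI (J (ν p)) (J Y) = 0 := by rw [rI_J_J, hY1]
  have hαp : gC ((ν p, (0:E n))) (Y, J Y) = 0 := by
    simp [gC, Complex.ext_iff, rI_zero_left, hY1, hY2]
  have hβp : gC ((J (ν p), (0:E n))) (Y, J Y) = 0 := by
    simp [gC, Complex.ext_iff, rI_zero_left, hb3, hb4]
  have hNF0 : gC (NF ν p) (Y, J Y) = 0 := by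
    simp [NF, gC, Complex.ext_iff, rI_smul_left, rI_neg_left, hY1, hY2, hb3, hb4]
  have hNFc0 : gC (conjCV (NF ν p)) (Y, J Y) = 0 := by
    simp [NF, conjCV, gC, Complex.ext_iff, rI_smul_left, rI_neg_left, hY1, hY2, hb3, hb4]
  have hTF0 : gC (TF ν p) (Y, J Y) = 0 := by
    simp [TF, gC, Complex.ext_iff, rI_zero_left, hb3, hb4]
  -- kill the normal corrections
  unfold nabla
  rw [gC_add_left, gC_add_left, gC_sub_left, gC_sub_left, gC_csmul_left, gC_csmul_left,
    gC_csmul_left, hNF0, hNFc0, hTF0, mul_zero, mul_zero, mul_zero, sub_zero, sub_zero, add_zero]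
  -- the PiHb term vanishes
  have hPBfun : (fun z => gC (PiHb ν z (A z)) (Y, J Y)) = fun _ => (0:ℂ) := by
    funext z
    rw [show PiHb ν z (A z) = ((PiHb ν z (A z)).1, J ((PiHb ν z (A z)).1)) from
      Prod.ext rfl (PiHb_antiholo ν z (A z)), gC_antiholo]
  have hDDPB : gC (DD (fun z => PiHb ν z (A z)) u p) (Y, J Y) = 0 := by
    have h := dC_gC_fields (A := fun z => PiHb ν z (A z)) (B := fun _ => ((Y, J Y) : CV n)) u
      (cdiff (contDiff_PiHb1 hν hA1 hA2) p) (cdiff (contDiff_PiHb2 hν hA1 hA2) p)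
      (differentiableAt_const _) (differentiableAt_const _)
    rw [DD_const, gC_zero_right, add_zero, hPBfun, dC_const] at h
    exact h.symm
  rw [hDDPB, add_zero]
  -- the PiH term
  have hPA : gC (DD (fun z => PiH ν z (A z)) u p) (Y, J Y)
      = dC (fun z => gC (PiH ν z (A z)) (Y, J Y)) u p := by
    have h := dC_gC_fields (A := fun z => PiH ν z (A z)) (B := fun _ => ((Y, J Y) : CV n)) u
      (cdiff (contDiff_PiH1 hν hA1 hA2) p) (cdiff (contDiff_PiH2 hν hA1 hA2) p)
      (differentiableAt_const _) (differentiableAt_const _)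
    rw [DD_const, gC_zero_right, add_zero] at h
    exact h.symm
  rw [hPA]
  have hfun : (fun z => gC (PiH ν z (A z)) (Y, J Y))
      = fun z => (gC (A z) (Y, J Y)
          - gC ((ν z, (0:E n))) (A z) * gC ((ν z, (0:E n))) (Y, J Y))
          - gC ((J (ν z), (0:E n))) (A z) * gC ((J (ν z), (0:E n))) (Y, J Y) := by
    funext z
    rw [gC_PiH_pair]
  rw [hfun]
  -- differentiabilities
  have dA : DifferentiableAt ℝ (fun z => gC (A z) (Y, J Y)) p :=
    diffAt_gC (cdiff hA1 p) (cdiff hA2 p) (differentiableAt_const _) (differentiableAt_const _)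
  have dν1 : DifferentiableAt ℝ (fun z => (((ν z, (0:E n)) : CV n)).1) p := cdiff hν p
  have dν2 : DifferentiableAt ℝ (fun z => (((ν z, (0:E n)) : CV n)).2) p := differentiableAt_const _
  have dJ1 : DifferentiableAt ℝ (fun z => (((J (ν z), (0:E n)) : CV n)).1) p :=
    cdiff (contDiff_J hν) p
  have dJ2 : DifferentiableAt ℝ (fun z => (((J (ν z), (0:E n)) : CV n)).2) p :=
    differentiableAt_const _
  have d2 : DifferentiableAt ℝ (fun z => gC ((ν z, (0:E n))) (A z)) p :=
    diffAt_gC dν1 dν2 (cdiff hA1 p) (cdiff hA2 p)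
  have d3 : DifferentiableAt ℝ (fun z => gC ((ν z, (0:E n))) (Y, J Y)) p :=
    diffAt_gC dν1 dν2 (differentiableAt_const _) (differentiableAt_const _)
  have d4 : DifferentiableAt ℝ (fun z => gC ((J (ν z), (0:E n))) (A z)) p :=
    diffAt_gC dJ1 dJ2 (cdiff hA1 p) (cdiff hA2 p)
  have d5 : DifferentiableAt ℝ (fun z => gC ((J (ν z), (0:E n))) (Y, J Y)) p :=
    diffAt_gC dJ1 dJ2 (differentiableAt_const _) (differentiableAt_const _)
  rw [dC_sub (u := u) (dA.fun_sub (d2.fun_mul d3)) (d4.fun_mul d5), dC_sub (u := u) dA (d2.fun_mul d3),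
    dC_mul (u := u) d2 d3, dC_mul (u := u) d4 d5, hαp, hβp, zero_mul, zero_mul, add_zero, add_zero]

end Core2
-- FINAL LAYER
section Final
variable {n : ℕ}

lemma rI_self_J (x : E n) : rI x (J x) = 0 := by
  simp [rI, J, inner_smul_right, mul_comm]
  exact_mod_cast Complex.ofReal_im (‖x‖ ^ 2)

lemma DD_NF {ν : E n → E n} (hν : ContDiff ℝ (⊤:ℕ∞) ν) (u : CV n) (p : E n) :
    DD (fun z => NF ν z) u p
      = ((Real.sqrt 2)⁻¹ • fderiv ℝ ν p u.1 + (Real.sqrt 2)⁻¹ • J (fderiv ℝ ν p u.2),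
         (Real.sqrt 2)⁻¹ • fderiv ℝ ν p u.2 - (Real.sqrt 2)⁻¹ • J (fderiv ℝ ν p u.1)) := by
  have e1 : (fun z => (NF ν z).1) = fun z => (Real.sqrt 2)⁻¹ • ν z := rfl
  have e2 : (fun z => (NF ν z).2) = fun z => -((Real.sqrt 2)⁻¹ • J (ν z)) := rfl
  have h1 : ∀ d, fderiv ℝ (fun z => (Real.sqrt 2)⁻¹ • ν z) p d
      = (Real.sqrt 2)⁻¹ • fderiv ℝ ν p d := by
    intro d
    rw [fderiv_fun_const_smul (cdiff hν p)]
    simp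
  have h2 : ∀ d, fderiv ℝ (fun z => -((Real.sqrt 2)⁻¹ • J (ν z))) p d
      = -((Real.sqrt 2)⁻¹ • J (fderiv ℝ ν p d)) := by
    intro d
    rw [fderiv_fun_neg, fderiv_fun_const_smul (diffAt_J (cdiff hν p))]
    simp only [ContinuousLinearMap.neg_apply, ContinuousLinearMap.smul_apply]
    rw [fderiv_J_apply (cdiff hν p)]
  unfold DD
  rw [e1, e2, h1 u.1, h1 u.2, h2 u.1, h2 u.2]
  refine Prod.ext ?_ ?_
  · show (Real.sqrt 2)⁻¹ • fderiv ℝ ν p u.1 - -((Real.sqrt 2)⁻¹ • J (fderiv ℝ ν p u.2)) = _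
    rw [sub_neg_eq_add]
  · show (Real.sqrt 2)⁻¹ • fderiv ℝ ν p u.2 + -((Real.sqrt 2)⁻¹ • J (fderiv ℝ ν p u.1)) = _
    rw [← sub_eq_add_neg]

lemma gC_NFdd (c d Y : E n) :
    gC ((Real.sqrt 2)⁻¹ • c + (Real.sqrt 2)⁻¹ • J d, (Real.sqrt 2)⁻¹ • d - (Real.sqrt 2)⁻¹ • J c)
        ((Y, J Y) : CV n)
      = ((Real.sqrt 2 : ℝ) : ℂ) * gC ((Y, J Y) : CV n) (c, d) := by
  simp only [gC, rI_add_left, rI_sub_left, rI_smul_left, rI_J_J, Complex.ext_iff,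
    Complex.add_re, Complex.add_im, Complex.mul_re, Complex.mul_im, Complex.ofReal_re,
    Complex.ofReal_im, Complex.I_re, Complex.I_im]
  rw [rI_J_left d Y, rI_J_left c Y]
  rw [rI_comm Y c, rI_comm Y d, rI_comm (J Y) c, rI_comm (J Y) d]
  constructor
  · linear_combination (rI c Y - rI d (J Y)) * sqrt2_fact
  · linear_combination (rI c (J Y) + rI d Y) * sqrt2_fact

lemma gC_NF_antiholo {ν : E n → E n} {p : E n} {Y : E n}
    (hY1 : rI (ν p) Y = 0) (hY2 : rI (ν p) (J Y) = 0) :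
    gC (NF ν p) ((Y, J Y) : CV n) = 0 := by
  have hb3 : rI (J (ν p)) Y = 0 := by rw [rI_J_left, hY2, neg_zero]
  have hb4 : rI (J (ν p)) (J Y) = 0 := by rw [rI_J_J, hY1]
  simp [NF, gC, Complex.ext_iff, rI_smul_left, rI_neg_left, hY1, hY2, hb3, hb4]

lemma etaD {ν : E n → E n} (hν : ContDiff ℝ (⊤:ℕ∞) ν) (p : E n) (Y : E n) (u : CV n) :
    dC (fun z => gC (NF ν z) ((Y, J Y) : CV n)) u p
      = ((Real.sqrt 2 : ℝ) : ℂ) * hC ν p ((Y, J Y) : CV n) u := by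
  have h := dC_gC_fields (A := fun z => NF ν z) (B := fun _ => ((Y, J Y) : CV n)) u
    (cdiff (contDiff_NF1 hν) p) (cdiff (contDiff_NF2 hν) p)
    (differentiableAt_const _) (differentiableAt_const _)
  rw [DD_const, gC_zero_right, add_zero, DD_NF hν u p, gC_NFdd] at h
  exact h

lemma sqrt2_sq_C : ((Real.sqrt 2 : ℝ) : ℂ) * ((Real.sqrt 2 : ℝ) : ℂ) = 2 := by
  rw [← Complex.ofReal_mul, Real.mul_self_sqrt (by norm_num)]
  norm_num

lemma sqrt2_fact_C : (2:ℂ) * ((Real.sqrt 2)⁻¹ : ℝ) = ((Real.sqrt 2 : ℝ) : ℂ) := by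
  exact_mod_cast sqrt2_fact

lemma sqrt2_inv_mul_C : (((Real.sqrt 2)⁻¹ : ℝ) : ℂ) * ((Real.sqrt 2 : ℝ) : ℂ) = 1 := by
  exact_mod_cast sqrt2_inv_mul

lemma inner_term {M : Set (E n)} {ν : E n → E n} {U : E n → CV n}
    (hs : IsHypersurface M ν) (hU : IsHoloField M ν U)
    {Df : E n → CV n} (hD1 : ContDiff ℝ (⊤:ℕ∞) (fun z => (Df z).1))
    (hD2 : ContDiff ℝ (⊤:ℕ∞) (fun z => (Df z).2))
    (hDt : ∀ z ∈ M, rI (ν z) ((Df z).1) = 0 ∧ rI (ν z) ((Df z).2) = 0)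
    {p : E n} (hp : p ∈ M) {u : CV n} (hu1 : rI (ν p) u.1 = 0) (hu2 : rI (ν p) u.2 = 0)
    {Y : E n} (hY1 : rI (ν p) Y = 0) (hY2 : rI (ν p) (J Y) = 0) :
    gC (nabla ν (fun z => nabla ν U (Df z) z) u p) ((Y, J Y) : CV n)
      = dC (fun z => dC (fun y => gC (U y) ((Y, J Y) : CV n)) (Df z) z) u p
        + 2 * hC ν p (U p) (Df p) * hC ν p ((Y, J Y) : CV n) u := by
  have hν := hs.1
  have hU1 : ContDiff ℝ (⊤:ℕ∞) (fun z => (U z).1) := hU.1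
  have hU2 := holo_snd hU
  have hP1 := (contDiff_nabla1 hν hU1 hU2 hD1 hD2).1
  have hP2 := (contDiff_nabla1 hν hU1 hU2 hD1 hD2).2
  rw [MF hν hY1 hY2 hP1 hP2 u]
  -- key pointwise facts at p
  have hNABp := NAB hs hU hp (hDt p hp).1 (hDt p hp).2
  have hT1 := T1M hs hU hp (hDt p hp).1 (hDt p hp).2
  have hT2 := T2M hs hU hp (hDt p hp).1 (hDt p hp).2
  have hrνν : rI (ν p) (ν p) = 1 := by
    rw [rI_self, hs.2.1 p hp]; norm_num
  have hφ : gC (DD U (Df p) p) (conjCV (NF ν p))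
      = -((Real.sqrt 2 : ℝ) : ℂ) * hC ν p (U p) (Df p) := by
    have e : conjCV (NF ν p) = ((Real.sqrt 2)⁻¹ • ν p, (Real.sqrt 2)⁻¹ • J (ν p)) := by
      simp [conjCV, NF]
    rw [e, gC_real_smul_right, gC_split_right, hT1, hT2]
    linear_combination ((((Real.sqrt 2)⁻¹:ℝ):ℂ) * hC ν p (U p) (Df p)) * Complex.I_sq
      - hC ν p (U p) (Df p) * sqrt2_fact_C
  have hgNν : gC (NF ν p) ((ν p, (0:E n))) = (((Real.sqrt 2)⁻¹:ℝ):ℂ) := by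
    have h1 : rI (J (ν p)) (ν p) = 0 := by
      rw [rI_J_left, rI_self_J, neg_zero]
    simp [NF, gC, Complex.ext_iff, rI_smul_left, rI_neg_left, rI_zero_right, hrνν, h1]
  have hgNJν : gC (NF ν p) ((J (ν p), (0:E n)))
      = -((((Real.sqrt 2)⁻¹:ℝ):ℂ) * Complex.I) := by
    simp [NF, gC, Complex.ext_iff, rI_smul_left, rI_neg_left, rI_zero_right, rI_self_J,
      rI_J_J, hrνν]
  -- the two coefficients vanish
  have hc1 : gC ((ν p, (0:E n))) (nabla ν U (Df p) p) = 0 := by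
    rw [gC_symm, hNABp, gC_sub_left, gC_csmul_left, hT1, hφ, hgNν]
    linear_combination (hC ν p (U p) (Df p)) * sqrt2_inv_mul_C
  have hc2 : gC ((J (ν p), (0:E n))) (nabla ν U (Df p) p) = 0 := by
    rw [gC_symm, hNABp, gC_sub_left, gC_csmul_left, hT2, hφ, hgNJν]
    linear_combination (- hC ν p (U p) (Df p) * Complex.I) * sqrt2_inv_mul_C
  rw [hc1, hc2, zero_mul, zero_mul, sub_zero, sub_zero]
  -- replace nabla by its on-M expression inside the dC
  have hDDc1 : ContDiff ℝ (⊤:ℕ∞) (fun z => (DD U (Df z) z).1) := contDiff_DD1 hU1 hU2 hD1 hD2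
  have hDDc2 : ContDiff ℝ (⊤:ℕ∞) (fun z => (DD U (Df z) z).2) := contDiff_DD2 hU1 hU2 hD1 hD2
  have hφc : ContDiff ℝ (⊤:ℕ∞) (fun z => gC (DD U (Df z) z) (conjCV (NF ν z))) :=
    contDiff_gC hDDc1 hDDc2 (contDiff_NF1 hν) ((contDiff_NF2 hν).neg)
  have hηc : ContDiff ℝ (⊤:ℕ∞) (fun z => gC (NF ν z) ((Y, J Y) : CV n)) :=
    contDiff_gC (contDiff_NF1 hν) (contDiff_NF2 hν) contDiff_const contDiff_const
  have hGc : ContDiff ℝ (⊤:ℕ∞) (fun z => gC (DD U (Df z) z) ((Y, J Y) : CV n)) :=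
    contDiff_gC hDDc1 hDDc2 contDiff_const contDiff_const
  have hf1c : ContDiff ℝ (⊤:ℕ∞) (fun z => gC (nabla ν U (Df z) z) ((Y, J Y) : CV n)) :=
    contDiff_gC hP1 hP2 contDiff_const contDiff_const
  have hf2c : ContDiff ℝ (⊤:ℕ∞) (fun z => gC (DD U (Df z) z) ((Y, J Y) : CV n)
      - gC (DD U (Df z) z) (conjCV (NF ν z)) * gC (NF ν z) ((Y, J Y) : CV n)) :=
    hGc.sub (hφc.mul hηc)
  have heq : dC (fun z => gC (nabla ν U (Df z) z) ((Y, J Y) : CV n)) u p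
      = dC (fun z => gC (DD U (Df z) z) ((Y, J Y) : CV n)
          - gC (DD U (Df z) z) (conjCV (NF ν z)) * gC (NF ν z) ((Y, J Y) : CV n)) u p := by
    have hvan : ∀ z ∈ M, gC (nabla ν U (Df z) z) ((Y, J Y) : CV n)
        - (gC (DD U (Df z) z) ((Y, J Y) : CV n)
          - gC (DD U (Df z) z) (conjCV (NF ν z)) * gC (NF ν z) ((Y, J Y) : CV n)) = 0 := by
      intro z hz
      rw [NAB hs hU hz (hDt z hz).1 (hDt z hz).2, gC_sub_left, gC_csmul_left]
      ring
    have h0 : dC (fun z => gC (nabla ν U (Df z) z) ((Y, J Y) : CV n)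
        - (gC (DD U (Df z) z) ((Y, J Y) : CV n)
          - gC (DD U (Df z) z) (conjCV (NF ν z)) * gC (NF ν z) ((Y, J Y) : CV n))) u p = 0 :=
      dC_vanish hs hp ((cdiff hf1c p).sub (cdiff hf2c p)) hvan hu1 hu2
    have h1 : dC (fun z => gC (nabla ν U (Df z) z) ((Y, J Y) : CV n)
        - (gC (DD U (Df z) z) ((Y, J Y) : CV n)
          - gC (DD U (Df z) z) (conjCV (NF ν z)) * gC (NF ν z) ((Y, J Y) : CV n))) u p
        = dC (fun z => gC (nabla ν U (Df z) z) ((Y, J Y) : CV n)) u p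
          - dC (fun z => gC (DD U (Df z) z) ((Y, J Y) : CV n)
          - gC (DD U (Df z) z) (conjCV (NF ν z)) * gC (NF ν z) ((Y, J Y) : CV n)) u p :=
      dC_sub u (cdiff hf1c p) (cdiff hf2c p)
    rw [h1] at h0
    linear_combination h0
  rw [heq]
  have hs1 : dC (fun z => gC (DD U (Df z) z) ((Y, J Y) : CV n)
        - gC (DD U (Df z) z) (conjCV (NF ν z)) * gC (NF ν z) ((Y, J Y) : CV n)) u p
      = dC (fun z => gC (DD U (Df z) z) ((Y, J Y) : CV n)) u p
        - dC (fun z => gC (DD U (Df z) z) (conjCV (NF ν z)) * gC (NF ν z) ((Y, J Y) : CV n)) u p :=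
    dC_sub u (cdiff hGc p) (cdiff (hφc.mul hηc) p)
  have hs2 : dC (fun z => gC (DD U (Df z) z) (conjCV (NF ν z)) * gC (NF ν z) ((Y, J Y) : CV n)) u p
      = gC (DD U (Df p) p) (conjCV (NF ν p)) * dC (fun z => gC (NF ν z) ((Y, J Y) : CV n)) u p
        + gC (NF ν p) ((Y, J Y) : CV n) * dC (fun z => gC (DD U (Df z) z) (conjCV (NF ν z))) u p :=
    dC_mul u (cdiff hφc p) (cdiff hηc p)
  rw [hs1, hs2, gC_NF_antiholo hY1 hY2, zero_mul, add_zero, hφ, etaD hν p Y u]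
  have hfe : (fun z => gC (DD U (Df z) z) ((Y, J Y) : CV n))
      = fun z => dC (fun y => gC (U y) ((Y, J Y) : CV n)) (Df z) z := by
    funext z
    have h := dC_gC_fields (A := U) (B := fun _ => ((Y, J Y) : CV n)) (Df z)
      (cdiff hU1 z) (cdiff hU2 z) (differentiableAt_const _) (differentiableAt_const _)
    rw [DD_const, gC_zero_right, add_zero] at h
    exact h.symm
  rw [hfe]
  linear_combination (hC ν p (U p) (Df p) * hC ν p ((Y, J Y) : CV n) u) * sqrt2_sq_C

end Final
theorem stmt16 {n : ℕ} (M : Set (E n)) (ν : E n → E n)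
    (hsurf : IsHypersurface M ν)
    (Z W U V : E n → CV n) (hZ : IsHoloField M ν Z) (hW : IsHoloField M ν W)
    (hU : IsHoloField M ν U) (hV : IsHoloField M ν V) :
    ∀ p ∈ M, gC (Rnab ν Z (conjF W) U p) (conjCV (V p))
      = 2 * (hC ν p (U p) (conjCV (W p)) * hC ν p (conjCV (V p)) (Z p)
          - hC ν p (U p) (Z p) * hC ν p (conjCV (V p)) (conjCV (W p))) := by
  intro p hp
  have hν := hsurf.1
  have hVc : conjCV (V p) = (((V p).1, J ((V p).1)) : CV n) :=
    Prod.ext rfl (by show -(V p).2 = J ((V p).1); rw [hV.2.1 p, neg_neg])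
  rw [hVc]
  have hY1 : rI (ν p) ((V p).1) = 0 := (holo_facts hV hp).1
  have hY2 : rI (ν p) (J ((V p).1)) = 0 := (holo_facts hV hp).2
  have hZt : ∀ z ∈ M, rI (ν z) ((Z z).1) = 0 ∧ rI (ν z) ((Z z).2) = 0 := fun z hz =>
    ⟨(holo_facts hZ hz).1, by
      rw [hZ.2.1 z, rI_neg_right, (holo_facts hZ hz).2, neg_zero]⟩
  have hWt : ∀ z ∈ M, rI (ν z) ((conjF W z).1) = 0 ∧ rI (ν z) ((conjF W z).2) = 0 := fun z hz =>
    ⟨(holo_facts hW hz).1, by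
      show rI (ν z) (-(W z).2) = 0
      rw [hW.2.1 z, neg_neg, (holo_facts hW hz).2]⟩
  have hWc1 : ContDiff ℝ (⊤:ℕ∞) (fun z => (conjF W z).1) := hW.1
  have hWc2 : ContDiff ℝ (⊤:ℕ∞) (fun z => (conjF W z).2) := (holo_snd hW).neg
  have t1 := inner_term hsurf hU hWc1 hWc2 hWt hp (hZt p hp).1 (hZt p hp).2 hY1 hY2
  have t2 := inner_term hsurf hU hZ.1 (holo_snd hZ) hZt hp (hWt p hp).1 (hWt p hp).2 hY1 hY2
  have t3 := MF hν hY1 hY2 hU.1 (holo_snd hU) (bracket Z (conjF W) p)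
  have hUpeq : U p = (((U p).1, -J ((U p).1)) : CV n) := Prod.ext rfl (hU.2.1 p)
  have hcU1 : gC ((ν p, (0:E n))) (U p) = 0 := by
    rw [hUpeq]
    simp [gC, Complex.ext_iff, rI_zero_left, rI_neg_right,
      (holo_facts hU hp).1, (holo_facts hU hp).2]
  have hcU2 : gC ((J (ν p), (0:E n))) (U p) = 0 := by
    have b3 : rI (J (ν p)) ((U p).1) = 0 := by
      rw [rI_J_left, (holo_facts hU hp).2, neg_zero]
    have b4 : rI (J (ν p)) (J ((U p).1)) = 0 := by
      rw [rI_J_J, (holo_facts hU hp).1]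
    rw [hUpeq]
    simp [gC, Complex.ext_iff, rI_zero_left, rI_neg_right, b3, b4]
  rw [hcU1, hcU2, zero_mul, zero_mul, sub_zero, sub_zero] at t3
  have hg : ContDiff ℝ (⊤:ℕ∞) (fun y => gC (U y) ((((V p).1, J ((V p).1))) : CV n)) :=
    contDiff_gC_const _ hU.1 (holo_snd hU)
  have hsch := schwarz hg (cdiff hZ.1 p) (cdiff (holo_snd hZ) p) (cdiff hWc1 p) (cdiff hWc2 p)
  unfold Rnab
  rw [gC_sub_left, gC_sub_left, t1, t2, t3]
  simp only [conjF] at *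
  linear_combination hsch
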